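/- Under conjugation by the affine map x ↦ Bx ⊕ c (B ∈ GL_n(F_2), c ∈ F_2^n), the set W of multilinear polynomials over Z_{2^k} with zero constant term and α-coefficient divisible by 2^{|α|-1} is preserved, up to discarding the constant term: if p ∈ W then p(Bx ⊕ c), reduced to multilinear form, has all nonconstant degree-t coefficients divisible by 2^{t-1}. -/

import Mathlib

open scoped Matrix

/-- Evaluation of a multilinear polynomial over `ℤ_{2^k}` (coefficients indexed
by subsets `α ⊆ [n]`) at a bit string `b ∈ {0,1}ⁿ`, using `x_j² = x_j`. -/
noncomputable def evalP (n k : ℕ) (p : Finset (Fin n) → ZMod (2 ^ k))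
    (b : Fin n → ZMod 2) : ZMod (2 ^ k) :=
  ∑ α : Finset (Fin n), p α * ∏ j ∈ α, ((b j).val : ZMod (2 ^ k))

/-!
Every coordinate `x ↦ (Bx ⊕ c)_j` is an iterated XOR of the bits `x_ℓ` and a constant, and
`y ⊕ z = y + z - 2yz`. Say a cube function has level `m` if it is represented by a multilinear
polynomial whose `S`-coefficient is divisible by `2 ^ (|S| - m)`. Levels add under products, a
factor `2 ^ j` lowers the level by `j`, and single bits have level `1`; so by the XOR formula every
affine bit has level `1`, and `p(Bx ⊕ c) = ∑_γ p_γ ∏_{j ∈ γ} (Bx ⊕ c)_j` has level `1` because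
`2 ^ (|γ| - 1) ∣ p_γ`. Multilinear representations of cube functions are unique (Möbius inversion
over the subsets), so the level-`1` divisibility passes to the coefficients of `q`.
-/

open Finset

lemma ZMod.mem_zmultiples_iff_dvd {N : ℕ} {a x : ZMod N} :
    a ∈ AddSubgroup.zmultiples x ↔ x ∣ a := by
  rw [AddSubgroup.mem_zmultiples_iff]
  constructor
  · rintro ⟨z, rfl⟩
    exact ⟨z, by rw [zsmul_eq_mul, mul_comm]⟩
  · rintro ⟨u, rfl⟩
    exact ⟨(u.cast : ℤ), by rw [zsmul_eq_mul, ZMod.intCast_zmod_cast, mul_comm]⟩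

lemma ZMod.natCast_val_add_two {R : Type*} [CommRing R] (y z : ZMod 2) :
    ((y + z).val : R) = y.val + z.val - 2 * (y.val * z.val) := by
  have h : ((y + z).val : ℤ) = y.val + z.val - 2 * (y.val * z.val) := by revert y z; decide
  exact_mod_cast congrArg (Int.cast : ℤ → R) h

lemma ZMod.natCast_val_mul_two {R : Type*} [CommRing R] (y z : ZMod 2) :
    ((y * z).val : R) = y.val * z.val := by
  have h : (y * z).val = y.val * z.val := by revert y z; decide
  rw [h, Nat.cast_mul]

namespace Multilinear

variable {σ ι R : Type*} [Fintype σ] [CommRing R]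

/-- `evalP n k` is `eval` for `σ = Fin n` and `R = ZMod (2 ^ k)`. -/
def eval (r : Finset σ → R) (b : σ → ZMod 2) : R :=
  ∑ S, r S * ∏ j ∈ S, ((b j).val : R)

/-- The set `W` consists of the representing polynomials of level-`1` functions with zero
constant term. -/
def HasLevel (m : ℕ) (f : (σ → ZMod 2) → R) : Prop :=
  ∃ r : Finset σ → R, (∀ S, (2 : R) ^ (#S - m) ∣ r S) ∧ eval r = f

namespace HasLevel

variable {m m' : ℕ} {f g : (σ → ZMod 2) → R}

lemma mono (h : HasLevel m f) (hm : m ≤ m') : HasLevel m' f := by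
  obtain ⟨r, hr, rfl⟩ := h
  exact ⟨r, fun S => (pow_dvd_pow 2 (by omega)).trans (hr S), rfl⟩

lemma add (hf : HasLevel m f) (hg : HasLevel m g) : HasLevel m (f + g) := by
  obtain ⟨r, hr, rfl⟩ := hf
  obtain ⟨r', hr', rfl⟩ := hg
  refine ⟨r + r', fun S => dvd_add (hr S) (hr' S), ?_⟩
  funext b
  simp only [eval, Pi.add_apply, add_mul, sum_add_distrib]

lemma const_mul {j : ℕ} {a : R} (ha : (2 : R) ^ j ∣ a) (hf : HasLevel m f) :
    HasLevel (m - j) (fun b => a * f b) := by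
  obtain ⟨r, hr, rfl⟩ := hf
  refine ⟨fun S => a * r S, fun S => ?_, ?_⟩
  · exact (pow_dvd_pow 2 (by omega)).trans (pow_add (2 : R) j (#S - m) ▸ mul_dvd_mul ha (hr S))
  · funext b
    simp only [eval, mul_sum, mul_assoc]

end HasLevel

variable [DecidableEq σ]

lemma prod_val_eq_ite (S : Finset σ) (b : σ → ZMod 2) :
    ∏ j ∈ S, ((b j).val : R) = if S ⊆ ({j | b j ≠ 0} : Finset σ) then 1 else 0 := by
  split_ifs with h
  · refine prod_eq_one fun j hj => ?_
    have hbj : b j = 1 := by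
      have := (mem_filter.mp (h hj)).2
      revert this; generalize b j = x; revert x; decide
    rw [hbj, ZMod.val_one, Nat.cast_one]
  · obtain ⟨j, hjS, hj⟩ := not_subset.mp h
    refine prod_eq_zero hjS ?_
    rw [not_not.mp fun h' => hj (mem_filter.mpr ⟨mem_univ j, h'⟩), ZMod.val_zero, Nat.cast_zero]

lemma eval_indicator (r : Finset σ → R) (β : Finset σ) :
    eval r (fun j => if j ∈ β then 1 else 0) = ∑ γ ∈ β.powerset, r γ := by
  have hsupp : ({j | (if j ∈ β then 1 else 0 : ZMod 2) ≠ 0} : Finset σ) = β := by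
    ext j; by_cases hj : j ∈ β <;> simp [hj]
  simp only [eval, prod_val_eq_ite, hsupp, mul_ite, mul_one, mul_zero, sum_ite,
    sum_const_zero, add_zero]
  congr 1
  ext γ; simp

lemma eval_injective : Function.Injective (eval (σ := σ) (R := R)) := by
  intro r r' h
  have hsum : ∀ β : Finset σ, ∑ γ ∈ β.powerset, r γ = ∑ γ ∈ β.powerset, r' γ := fun β => by
    rw [← eval_indicator, ← eval_indicator, h]
  funext β
  induction β using Finset.strongInduction with
  | H β ih =>
    have hsplit : ∀ f : Finset σ → R,
        ∑ γ ∈ β.powerset, f γ = f β + ∑ γ ∈ β.ssubsets, f γ := fun f =>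
      (add_sum_erase _ f (mem_powerset_self β)).symm
    have := hsum β
    rw [hsplit, hsplit, sum_congr rfl fun γ hγ => ih γ (mem_ssubsets.mp hγ)] at this
    exact add_right_cancel this

lemma hasLevel_const (a : R) : HasLevel 0 (fun _ : σ → ZMod 2 => a) := by
  refine ⟨fun S => if S = ∅ then a else 0, fun S => ?_, ?_⟩
  · dsimp only
    split_ifs with h
    · simp [h]
    · exact dvd_zero _
  · funext b
    simp [eval]

lemma hasLevel_val_apply (i : σ) : HasLevel 1 (fun b : σ → ZMod 2 => ((b i).val : R)) := by
  refine ⟨fun S => if S = {i} then 1 else 0, fun S => ?_, ?_⟩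
  · dsimp only
    split_ifs with h
    · simp [h]
    · exact dvd_zero _
  · funext b
    simp [eval]

namespace HasLevel

variable {m m' : ℕ} {f g : (σ → ZMod 2) → R}

lemma dvd_of_eval {r : Finset σ → R} (h : HasLevel m (eval r)) (S : Finset σ) :
    (2 : R) ^ (#S - m) ∣ r S := by
  obtain ⟨r', hr', heq⟩ := h
  exact eval_injective heq ▸ hr' S

lemma mul (hf : HasLevel m f) (hg : HasLevel m' g) : HasLevel (m + m') (f * g) := by
  obtain ⟨r, hr, rfl⟩ := hf
  obtain ⟨r', hr', rfl⟩ := hg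
  refine ⟨fun S => ∑ T ∈ univ.filter (fun T : Finset σ × Finset σ => T.1 ∪ T.2 = S),
    r T.1 * r' T.2, fun S => dvd_sum fun T hT => ?_, ?_⟩
  · obtain rfl := (mem_filter.mp hT).2
    have := card_union_le T.1 T.2
    exact (pow_dvd_pow 2 (by omega)).trans (pow_add (2 : R) _ _ ▸ mul_dvd_mul (hr T.1) (hr' T.2))
  · funext b
    calc _ = ∑ T : Finset σ × Finset σ, r T.1 * r' T.2 * ∏ j ∈ T.1 ∪ T.2, ((b j).val : R) := by
          rw [eval, ← sum_fiberwise univ (fun T : Finset σ × Finset σ => T.1 ∪ T.2)]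
          refine sum_congr rfl fun S _ => ?_
          rw [sum_mul]
          exact sum_congr rfl fun T hT => by rw [(mem_filter.mp hT).2]
      _ = eval r b * eval r' b := by
          rw [eval, eval, sum_mul_sum, ← univ_product_univ, sum_product]
          refine sum_congr rfl fun S _ => sum_congr rfl fun T _ => ?_
          simp only [prod_val_eq_ite, union_subset_iff, ite_and]
          split_ifs <;> ring

lemma sum {s : Finset ι} {f : ι → (σ → ZMod 2) → R} (h : ∀ i ∈ s, HasLevel m (f i)) :
    HasLevel m (fun b => ∑ i ∈ s, f i b) := by
  simpa only [← Finset.sum_apply] using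
    sum_induction f (HasLevel m) (fun _ _ => add) ((hasLevel_const 0).mono (Nat.zero_le m)) h

lemma prod {s : Finset ι} {f : ι → (σ → ZMod 2) → R} {m : ι → ℕ}
    (h : ∀ i ∈ s, HasLevel (m i) (f i)) :
    HasLevel (∑ i ∈ s, m i) (fun b => ∏ i ∈ s, f i b) := by
  induction s using Finset.cons_induction with
  | empty => exact hasLevel_const 1
  | cons i s hi ih =>
    simp only [sum_cons, prod_cons]
    exact (h i (mem_cons_self i s)).mul (ih fun j hj => h j (mem_cons_of_mem hj))

end HasLevel

lemma hasLevel_val_add {f g : (σ → ZMod 2) → ZMod 2}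
    (hf : HasLevel 1 (fun b => ((f b).val : R))) (hg : HasLevel 1 (fun b => ((g b).val : R))) :
    HasLevel 1 (fun b => ((f b + g b).val : R)) := by
  have hfg := (hf.mul hg).const_mul (j := 1) (a := -2) (by simp)
  convert (hf.add hg).add hfg using 1
  funext b
  simp only [Pi.add_apply, Pi.mul_apply, ZMod.natCast_val_add_two]
  ring

lemma hasLevel_val_sum {s : Finset ι} {g : ι → (σ → ZMod 2) → ZMod 2}
    (h : ∀ i ∈ s, HasLevel 1 (fun b => ((g i b).val : R))) :
    HasLevel 1 (fun b => ((∑ i ∈ s, g i b).val : R)) := by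
  have hzero : HasLevel 1 (fun b => (((0 : (σ → ZMod 2) → ZMod 2) b).val : R)) := by
    simpa using (hasLevel_const (0 : R)).mono zero_le_one
  simpa only [Finset.sum_apply] using
    sum_induction g (fun y => HasLevel 1 (fun b => ((y b).val : R)))
      (fun _ _ => hasLevel_val_add) hzero h

lemma hasLevel_val_mulVec_add (B : Matrix ι σ (ZMod 2)) (c : ι → ZMod 2) (j : ι) :
    HasLevel 1 (fun b => (((B *ᵥ b + c) j).val : R)) := by
  simp only [Pi.add_apply, Matrix.mulVec, dotProduct]
  refine hasLevel_val_add (hasLevel_val_sum fun ℓ _ => ?_) ((hasLevel_const _).mono zero_le_one)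
  simp only [ZMod.natCast_val_mul_two]
  exact (hasLevel_const _).mul (hasLevel_val_apply ℓ)

lemma hasLevel_one_eval_mulVec_add [Fintype ι] (B : Matrix ι σ (ZMod 2)) (c : ι → ZMod 2)
    {p : Finset ι → R} (hp : ∀ γ, (2 : R) ^ (#γ - 1) ∣ p γ) :
    HasLevel 1 (fun b => eval p (B *ᵥ b + c)) := by
  have hterm : ∀ γ : Finset ι,
      HasLevel 1 (fun b => p γ * ∏ j ∈ γ, (((B *ᵥ b + c) j).val : R)) := fun γ => by
    have hprod := HasLevel.prod (s := γ) fun j _ => hasLevel_val_mulVec_add (R := R) B c j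
    simp only [sum_const, smul_eq_mul, mul_one] at hprod
    exact (hprod.const_mul (hp γ)).mono (by omega)
  exact HasLevel.sum fun γ _ => hterm γ

end Multilinear

open Multilinear in
theorem substitution_preserves_W_general (n k : ℕ)
    (B : Matrix (Fin n) (Fin n) (ZMod 2))
    (c : Fin n → ZMod 2)
    (p q : Finset (Fin n) → ZMod (2 ^ k))
    (hpdiv : ∀ α : Finset (Fin n), α.Nonempty →
      p α ∈ AddSubgroup.zmultiples ((2 : ZMod (2 ^ k)) ^ (α.card - 1)))
    (hq : ∀ b : Fin n → ZMod 2, evalP n k q b = evalP n k p (B.mulVec b + c)) :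
    ∀ α : Finset (Fin n), α.Nonempty →
      q α ∈ AddSubgroup.zmultiples ((2 : ZMod (2 ^ k)) ^ (α.card - 1)) := by
  have hp : ∀ γ : Finset (Fin n), (2 : ZMod (2 ^ k)) ^ (#γ - 1) ∣ p γ := fun γ => by
    rcases γ.eq_empty_or_nonempty with rfl | hγ
    · simp
    · exact ZMod.mem_zmultiples_iff_dvd.mp (hpdiv γ hγ)
  have hq_level : HasLevel 1 (eval q) := by
    convert hasLevel_one_eval_mulVec_add B c hp using 1
    exact funext hq
  exact fun α _ => ZMod.mem_zmultiples_iff_dvd.mpr (hq_level.dvd_of_eval α)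

/-- Conjugation by an invertible affine map `x ↦ Bx ⊕ c` of `𝔽₂ⁿ` preserves the
set `W` of multilinear polynomials over `ℤ_{2^k}` with zero constant term and
`α`-coefficient divisible by `2^{|α|-1}`, up to discarding the constant term:
if `p ∈ W` and `q` is the multilinear form of `x ↦ p(Bx ⊕ c)`, then every
nonconstant degree-`t` coefficient of `q` is divisible by `2^{t-1}`. -/
theorem substitution_preserves_W (n k : ℕ)
    (B : Matrix (Fin n) (Fin n) (ZMod 2)) (hB : IsUnit B)
    (c : Fin n → ZMod 2)
    (p q : Finset (Fin n) → ZMod (2 ^ k))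
    (hp0 : p ∅ = 0)
    (hpdiv : ∀ α : Finset (Fin n), α.Nonempty →
      p α ∈ AddSubgroup.zmultiples ((2 : ZMod (2 ^ k)) ^ (α.card - 1)))
    (hq : ∀ b : Fin n → ZMod 2, evalP n k q b = evalP n k p (B.mulVec b + c)) :
    ∀ α : Finset (Fin n), α.Nonempty →
      q α ∈ AddSubgroup.zmultiples ((2 : ZMod (2 ^ k)) ^ (α.card - 1)) :=
  substitution_preserves_W_general n k B c p q hpdiv hq
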